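/- arXiv:0806.1561 — 5 statements merged into one kernel-verified Lean document; each statement's English description precedes it below -/
import Mathlib

section
/- For all integers m ≥ n ≥ 1, every coefficient of the polynomial N_{m+1}(q)·N_{n−1}(q) − N_m(q)·N_n(q) is nonnegative. In other words, the sequence of Narayana polynomials (N_n(q))_{n≥0} is strongly q-log-convex. -/
/-!
Let `J = L U` act on sequences `ℕ → ℚ[X]`, where `(U a)ₚ = aₚ + aₚ₊₁` and `(L a)ₚ = aₚ + X aₚ₋₁`.
A ballot-type formula for all entries of `Jⁿ e₀` shows `N_n = (Jⁿ e₀)₀`. The bidiagonal factors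
have coefficientwise nonnegative entries, so they preserve nonnegative vectors and pairs of vectors
with nonnegative `2 × 2` minors. Starting from `(e₀, J e₀)`, the pair `(Jʲ e₀, Jʲ⁺¹ e₀)` has
nonnegative minors, so `z = N_j Jʲ⁺¹ e₀ - N_{j+1} Jʲ e₀` (whose entries are the minors through
row `0`) is nonnegative, and so is `(Jᵈ z)₀ = N_{d+j+1} N_j - N_{d+j} N_{j+1}`.
-/

noncomputable def narayanaPoly (n : ℕ) : Polynomial ℚ :=
  if n = 0 then 1
  else ∑ k ∈ Finset.range (n + 1),
    Polynomial.C ((n.choose k * n.choose (k + 1) : ℚ) / n) * Polynomial.X ^ k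

open Polynomial

noncomputable section

namespace Polynomial

variable (R : Type*) [Semiring R] [PartialOrder R] [IsOrderedRing R]

def nonnegCoeffs : Subsemiring R[X] where
  carrier := {f | ∀ n, 0 ≤ f.coeff n}
  mul_mem' hf hg n := by
    rw [coeff_mul]
    exact Finset.sum_nonneg fun x _ => mul_nonneg (hf x.1) (hg x.2)
  one_mem' n := by rw [coeff_one]; split_ifs <;> simp
  add_mem' hf hg n := by rw [coeff_add]; exact add_nonneg (hf n) (hg n)
  zero_mem' n := by simp

lemma X_mem_nonnegCoeffs : X ∈ nonnegCoeffs R := fun n => by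
  rw [coeff_X]; split_ifs <;> simp

end Polynomial

namespace Narayana

section Operators

variable {R : Type*} [CommSemiring R]

def upper : Module.End R[X] (ℕ → R[X]) where
  toFun a p := a p + a (p + 1)
  map_add' a b := by funext p; simp only [Pi.add_apply]; ring
  map_smul' c a := by funext p; simp only [Pi.smul_apply, smul_eq_mul, RingHom.id_apply]; ring

def lower : Module.End R[X] (ℕ → R[X]) where
  toFun a
    | 0 => a 0
    | p + 1 => a (p + 1) + X * a p
  map_add' a b := by funext p; cases p <;> simp [mul_add, add_add_add_comm]
  map_smul' c a := by funext p; cases p <;> simp [mul_add, mul_left_comm]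

def jacobi : Module.End R[X] (ℕ → R[X]) := lower * upper

@[simp] lemma upper_apply (a : ℕ → R[X]) (p : ℕ) : upper a p = a p + a (p + 1) := rfl
@[simp] lemma lower_apply_zero (a : ℕ → R[X]) : lower a 0 = a 0 := rfl
@[simp] lemma lower_apply_succ (a : ℕ → R[X]) (p : ℕ) : lower a (p + 1) = a (p + 1) + X * a p :=
  rfl
lemma jacobi_apply_zero (a : ℕ → R[X]) : jacobi a 0 = a 0 + a 1 := rfl
lemma jacobi_apply_succ (a : ℕ → R[X]) (p : ℕ) :
    jacobi a (p + 1) = a (p + 1) + a (p + 2) + X * (a p + a (p + 1)) := rfl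

lemma jacobi_single_apply (h : ℕ) :
    jacobi (Pi.single 0 1 : ℕ → R[X]) h = if h ≤ 1 then X ^ h else 0 := by
  rcases h with _ | _ | h <;> simp [jacobi_apply_zero, jacobi_apply_succ]

end Operators

section Nonneg

variable {R : Type*} [CommSemiring R] [PartialOrder R] [IsOrderedRing R]

lemma jacobi_mem_nonnegCoeffs {a : ℕ → R[X]} (ha : ∀ p, a p ∈ nonnegCoeffs R) (p : ℕ) :
    jacobi a p ∈ nonnegCoeffs R := by
  cases p with
  | zero => exact add_mem (ha 0) (ha 1)
  | succ p =>
    exact add_mem (add_mem (ha _) (ha _)) (mul_mem (X_mem_nonnegCoeffs R) (add_mem (ha _) (ha _)))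

lemma jacobi_pow_mem_nonnegCoeffs {a : ℕ → R[X]} (ha : ∀ p, a p ∈ nonnegCoeffs R) (d p : ℕ) :
    (jacobi ^ d) a p ∈ nonnegCoeffs R := by
  induction d generalizing p with
  | zero => exact ha p
  | succ d ih => rw [pow_succ', Module.End.mul_apply]; exact jacobi_mem_nonnegCoeffs ih p

end Nonneg

section Minors

variable {R : Type*} [CommRing R] [PartialOrder R] [IsOrderedRing R]

def MinorsNonneg (a b : ℕ → R[X]) : Prop :=
  ∀ p q, p ≤ q → a p * b q - b p * a q ∈ nonnegCoeffs R

lemma MinorsNonneg.map_upper {a b : ℕ → R[X]} (h : MinorsNonneg a b) :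
    MinorsNonneg (upper a) (upper b) := by
  intro p q hpq
  obtain rfl | hlt := hpq.eq_or_lt
  · rw [mul_comm, sub_self]; exact zero_mem _
  have expand : upper a p * upper b q - upper b p * upper a q =
      (a p * b q - b p * a q) + (a p * b (q + 1) - b p * a (q + 1))
        + (a (p + 1) * b q - b (p + 1) * a q)
        + (a (p + 1) * b (q + 1) - b (p + 1) * a (q + 1)) := by
    simp only [upper_apply]; ring
  rw [expand]
  exact add_mem (add_mem (add_mem (h p q hpq) (h p (q + 1) (by omega))) (h (p + 1) q hlt))
    (h (p + 1) (q + 1) (by omega))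

lemma MinorsNonneg.map_lower {a b : ℕ → R[X]} (h : MinorsNonneg a b) :
    MinorsNonneg (lower a) (lower b) := by
  have hX := X_mem_nonnegCoeffs R
  intro p q hpq
  obtain rfl | hlt := hpq.eq_or_lt
  · rw [mul_comm, sub_self]; exact zero_mem _
  obtain ⟨q, rfl⟩ : ∃ q', q = q' + 1 := ⟨q - 1, by omega⟩
  cases p with
  | zero =>
    have expand : lower a 0 * lower b (q + 1) - lower b 0 * lower a (q + 1) =
        (a 0 * b (q + 1) - b 0 * a (q + 1)) + X * (a 0 * b q - b 0 * a q) := by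
      simp only [lower_apply_zero, lower_apply_succ]; ring
    rw [expand]
    exact add_mem (h 0 (q + 1) (by omega)) (mul_mem hX (h 0 q (by omega)))
  | succ p =>
    have expand : lower a (p + 1) * lower b (q + 1) - lower b (p + 1) * lower a (q + 1) =
        (a (p + 1) * b (q + 1) - b (p + 1) * a (q + 1)) + X * (a (p + 1) * b q - b (p + 1) * a q)
          + X * (a p * b (q + 1) - b p * a (q + 1)) + X * X * (a p * b q - b p * a q) := by
      simp only [lower_apply_succ]; ring
    rw [expand]
    exact add_mem (add_mem (add_mem (h _ _ (by omega)) (mul_mem hX (h _ _ (by omega))))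
      (mul_mem hX (h _ _ (by omega)))) (mul_mem (mul_mem hX hX) (h _ _ (by omega)))

lemma MinorsNonneg.map_jacobi {a b : ℕ → R[X]} (h : MinorsNonneg a b) :
    MinorsNonneg (jacobi a) (jacobi b) :=
  h.map_upper.map_lower

lemma minorsNonneg_single_jacobi_single :
    MinorsNonneg (Pi.single 0 1 : ℕ → R[X]) (jacobi (Pi.single 0 1)) := by
  intro p q hpq
  match p, q, hpq with
  | 0, 0, _ => rw [mul_comm, sub_self]; exact zero_mem _
  | 0, 1, _ => simpa [jacobi_apply_zero, jacobi_apply_succ] using X_mem_nonnegCoeffs R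
  | 0, q + 2, _ => simp [jacobi_apply_zero, jacobi_apply_succ]
  | p + 1, q + 1, _ => simp

lemma minorsNonneg_jacobi_pow (n : ℕ) :
    MinorsNonneg ((jacobi ^ n) (Pi.single 0 1 : ℕ → R[X]))
      ((jacobi ^ (n + 1)) (Pi.single 0 1)) := by
  induction n with
  | zero => exact minorsNonneg_single_jacobi_single
  | succ n ih =>
    simpa only [pow_succ' jacobi, Module.End.mul_apply] using ih.map_jacobi

end Minors

section Coefficients

def intChoose (n : ℕ) : ℤ → ℚ
  | (k : ℕ) => n.choose k
  | Int.negSucc _ => 0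

@[simp] lemma intChoose_natCast (n k : ℕ) : intChoose n k = n.choose k := rfl

lemma intChoose_of_neg {n : ℕ} {j : ℤ} (hj : j < 0) : intChoose n j = 0 := by
  cases j with
  | ofNat k => exact absurd hj (by simp)
  | negSucc k => rfl

lemma intChoose_of_lt {n : ℕ} {j : ℤ} (hj : n < j) : intChoose n j = 0 := by
  lift j to ℕ using by omega
  rw [intChoose_natCast, Nat.choose_eq_zero_of_lt (by omega), Nat.cast_zero]

lemma intChoose_zero (j : ℤ) : intChoose 0 j = if j = 0 then 1 else 0 := by
  rcases lt_trichotomy j 0 with hj | rfl | hj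
  · rw [intChoose_of_neg hj, if_neg hj.ne]
  · rfl
  · rw [intChoose_of_lt (by exact_mod_cast hj), if_neg hj.ne']

lemma intChoose_succ (n : ℕ) (j : ℤ) :
    intChoose (n + 1) j = intChoose n j + intChoose n (j - 1) := by
  rcases lt_trichotomy j 0 with hj | rfl | hj
  · rw [intChoose_of_neg hj, intChoose_of_neg hj, intChoose_of_neg (by omega), add_zero]
  · show ((n + 1).choose 0 : ℚ) = n.choose 0 + intChoose n (0 - 1)
    rw [intChoose_of_neg (by norm_num)]
    simp
  · obtain ⟨k, rfl⟩ : ∃ k : ℕ, j = k + 1 := ⟨(j - 1).toNat, by omega⟩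
    rw [add_sub_cancel_right, ← Nat.cast_succ, intChoose_natCast, intChoose_natCast,
      intChoose_natCast]
    exact_mod_cast (Nat.choose_succ_succ' n k).trans (add_comm _ _)

lemma add_one_mul_intChoose (n : ℕ) (j : ℤ) :
    (n + 1 : ℚ) * intChoose n j = (j + 1) * intChoose (n + 1) (j + 1) := by
  rcases lt_trichotomy j (-1) with hj | rfl | hj
  · rw [intChoose_of_neg (by omega), intChoose_of_neg (by omega), mul_zero, mul_zero]
  · simp [intChoose_of_neg]
  · lift j to ℕ using by omega
    rw [show (j : ℤ) + 1 = ((j + 1 : ℕ) : ℤ) by push_cast; rfl, intChoose_natCast,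
      intChoose_natCast]
    exact_mod_cast (Nat.add_one_mul_choose_eq n j).trans (mul_comm _ _)

/-- Coefficient of `X ^ k` in entry `h` of `(jacobi ^ (n + 1)) (Pi.single 0 1)`. -/
def jacobiCoeff (n : ℕ) (h k : ℤ) : ℚ :=
  intChoose (n + 1) k * intChoose n (k - h) - intChoose (n + 1) (k + 1) * intChoose n (k - h - 1)

lemma jacobiCoeff_succ (n : ℕ) (h k : ℤ) :
    jacobiCoeff (n + 1) (h + 1) (k + 1) =
      jacobiCoeff n (h + 1) (k + 1) + jacobiCoeff n (h + 2) (k + 1) + jacobiCoeff n h k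
        + jacobiCoeff n (h + 1) k := by
  simp only [jacobiCoeff]
  rw [intChoose_succ (n + 1) (k + 1), intChoose_succ (n + 1) (k + 1 + 1),
    intChoose_succ n (k + 1 - (h + 1)), intChoose_succ n (k + 1 - (h + 1) - 1)]
  ring_nf

lemma jacobiCoeff_neg_one_add_jacobiCoeff_zero (n : ℕ) (k : ℤ) :
    jacobiCoeff n (-1) k + jacobiCoeff n 0 k = 0 := by
  have hk := intChoose_succ n k
  have hk' : intChoose (n + 1) (k + 1) = intChoose n (k + 1) + intChoose n k := by
    simpa using intChoose_succ n (k + 1)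
  simp only [jacobiCoeff, sub_neg_eq_add, sub_zero, add_sub_cancel_right]
  linear_combination (intChoose n (k + 1) + intChoose n k) * hk
    - (intChoose n k + intChoose n (k - 1)) * hk'

lemma jacobiCoeff_of_neg {n : ℕ} {h k : ℤ} (hh : 0 ≤ h) (hk : k < 0) : jacobiCoeff n h k = 0 := by
  rw [jacobiCoeff, intChoose_of_neg hk, intChoose_of_neg (show k - h - 1 < 0 by omega), zero_mul,
    mul_zero, sub_zero]

lemma jacobiCoeff_zero (h k : ℕ) : jacobiCoeff 0 h k = if k = h ∧ h ≤ 1 then 1 else 0 := by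
  have hk1 : (k : ℤ) + 1 = ((k + 1 : ℕ) : ℤ) := by push_cast; rfl
  rw [jacobiCoeff, intChoose_zero, intChoose_zero, hk1, intChoose_natCast, intChoose_natCast]
  obtain rfl | hkh := eq_or_ne k h
  · rcases k with _ | _ | k <;> simp [Nat.choose_eq_zero_of_lt]
  obtain rfl | hkh' := eq_or_ne k (h + 1)
  · simp [Nat.choose_eq_zero_of_lt]
  · rw [if_neg (by omega), if_neg (by omega), if_neg (by omega)]
    ring

lemma add_one_mul_jacobiCoeff_zero (n : ℕ) (k : ℤ) :
    (n + 1 : ℚ) * jacobiCoeff n 0 k = intChoose (n + 1) k * intChoose (n + 1) (k + 1) := by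
  have h₀ := add_one_mul_intChoose n k
  have h₁ := add_one_mul_intChoose n (k - 1)
  rw [sub_add_cancel] at h₁
  push_cast at h₁
  simp only [jacobiCoeff, sub_zero]
  linear_combination intChoose (n + 1) k * h₀ - intChoose (n + 1) (k + 1) * h₁

lemma coeff_jacobi_pow_single (n h k : ℕ) :
    ((jacobi ^ (n + 1)) (Pi.single 0 1 : ℕ → ℚ[X]) h).coeff k = jacobiCoeff n h k := by
  induction n generalizing h k with
  | zero =>
    rw [zero_add, pow_one, jacobi_single_apply, jacobiCoeff_zero]
    split_ifs <;> simp_all [coeff_X_pow]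
  | succ n ih =>
    rw [pow_succ', Module.End.mul_apply]
    cases h with
    | zero =>
      have hstep := jacobiCoeff_succ n (-1) (k - 1)
      have hwall := jacobiCoeff_neg_one_add_jacobiCoeff_zero n (k - 1)
      rw [neg_add_cancel, sub_add_cancel, show (-1 : ℤ) + 2 = 1 by norm_num] at hstep
      rw [jacobi_apply_zero, coeff_add, ih, ih]
      push_cast
      linarith
    | succ h =>
      rw [jacobi_apply_succ]
      cases k with
      | zero =>
        have hstep := jacobiCoeff_succ n h (-1)
        have h₁ : jacobiCoeff n h (-1) = 0 := jacobiCoeff_of_neg (by omega) (by norm_num)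
        have h₂ : jacobiCoeff n (h + 1) (-1) = 0 := jacobiCoeff_of_neg (by omega) (by norm_num)
        rw [neg_add_cancel, h₁, h₂, add_zero, add_zero] at hstep
        simp only [coeff_add, mul_coeff_zero, coeff_X_zero, zero_mul, add_zero, ih]
        push_cast
        exact hstep.symm
      | succ k =>
        simp only [coeff_add, coeff_X_mul, ih]
        push_cast
        rw [jacobiCoeff_succ]
        ring

lemma coeff_narayanaPoly_succ (n k : ℕ) :
    (narayanaPoly (n + 1)).coeff k = ((n + 1).choose k * (n + 1).choose (k + 1) : ℚ) / (n + 1) := by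
  rw [narayanaPoly, if_neg n.succ_ne_zero, finsetSum_coeff]
  simp only [coeff_C_mul, coeff_X_pow, mul_ite, mul_one, mul_zero, Finset.sum_ite_eq,
    Finset.mem_range]
  split_ifs with hk
  · push_cast; rfl
  · rw [Nat.choose_eq_zero_of_lt (by omega : n + 1 < k + 1)]
    simp

end Coefficients

lemma jacobi_pow_single_apply_zero (n : ℕ) :
    (jacobi ^ n) (Pi.single 0 1 : ℕ → ℚ[X]) 0 = narayanaPoly n := by
  cases n with
  | zero => simp [narayanaPoly]
  | succ n =>
    ext k
    rw [coeff_jacobi_pow_single, coeff_narayanaPoly_succ, eq_div_iff (by positivity), mul_comm]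
    exact add_one_mul_jacobiCoeff_zero n k

lemma jacobi_pow_apply_jacobi_pow_single (k i : ℕ) :
    (jacobi ^ k) ((jacobi ^ i) (Pi.single 0 1 : ℕ → ℚ[X])) 0 = narayanaPoly (k + i) := by
  rw [← Module.End.mul_apply, ← pow_add, jacobi_pow_single_apply_zero]

end Narayana

end

open Narayana

/-- The Narayana polynomials form a strongly `q`-log-convex sequence: for `m ≥ n ≥ 1`
every coefficient of `N_{m+1}(q) N_{n-1}(q) - N_m(q) N_n(q)` is nonnegative. -/
theorem narayana_strongly_q_log_convex (m n : ℕ) (hn : 1 ≤ n) (hmn : n ≤ m) (r : ℕ) :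
    0 ≤ (narayanaPoly (m + 1) * narayanaPoly (n - 1)
      - narayanaPoly m * narayanaPoly n).coeff r := by
  obtain ⟨j, rfl⟩ : ∃ j, n = j + 1 := ⟨n - 1, by omega⟩
  obtain ⟨d, rfl⟩ : ∃ d, m = d + j := ⟨m - j, by omega⟩
  set z : ℕ → ℚ[X] := narayanaPoly j • (jacobi ^ (j + 1)) (Pi.single 0 1)
    - narayanaPoly (j + 1) • (jacobi ^ j) (Pi.single 0 1)
  have hz (q : ℕ) : z q ∈ nonnegCoeffs ℚ := by
    have hminor := minorsNonneg_jacobi_pow (R := ℚ) j 0 q q.zero_le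
    rwa [jacobi_pow_single_apply_zero, jacobi_pow_single_apply_zero] at hminor
  have key : narayanaPoly (d + j + 1) * narayanaPoly (j + 1 - 1)
      - narayanaPoly (d + j) * narayanaPoly (j + 1) = (jacobi ^ d) z 0 := by
    rw [map_sub, map_smul, map_smul, Pi.sub_apply, Pi.smul_apply, Pi.smul_apply, smul_eq_mul,
      smul_eq_mul, jacobi_pow_apply_jacobi_pow_single, jacobi_pow_apply_jacobi_pow_single,
      Nat.add_sub_cancel, ← add_assoc]
    ring
  rw [key]
  exact jacobi_pow_mem_nonnegCoeffs hz d 0 r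
end

section
/- For every integer m ≥ 1, every coefficient of the polynomial N_{m+1}(q)·N_{m−1}(q) − N_m(q)^2 is nonnegative. In other words, the Narayana polynomials N_n(q) form a q-log-convex sequence. -/
/-!
The Narayana polynomials are the Catalan-like numbers of Aigner: `N_n(q)` is the entry `(n, 0)` of
the recursive matrix whose tridiagonal production matrix has diagonal `1, 1 + q, 1 + q, …`,
subdiagonal `q` and superdiagonal `1`. This production matrix is coefficientwise totally positive
of order 2, so by Cauchy–Binet every 2 × 2 minor taken from two consecutive rows of the recursive
matrix has nonnegative coefficients; and `N_{n+2} N_n - N_{n+1}^2` is `q` times such a minor.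
The identification of column `0` with `N_n` uses the explicit entries
`n [q^j] T(n, k) = C(n, j) (k C(n, k + j) + (k + 1) C(n, k + j + 1))`.
-/

open Finset Polynomial

/-- Cauchy–Binet for 2 × 2 minors. -/
theorem Finset.sum_range_mul_sum_range_sub {R : Type*} [CommRing R] (a b c d : ℕ → R)
    (N : ℕ) :
    (∑ i ∈ range N, a i * c i) * (∑ i ∈ range N, b i * d i)
      - (∑ i ∈ range N, b i * c i) * (∑ i ∈ range N, a i * d i)
      = ∑ j ∈ range N, ∑ i ∈ range j,
          (a i * b j - b i * a j) * (c i * d j - c j * d i) := by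
  induction N with
  | zero => simp
  | succ N ih =>
    have hlast : ∑ i ∈ range N, (a i * b N - b i * a N) * (c i * d N - c N * d i)
        = b N * d N * ∑ i ∈ range N, a i * c i + a N * c N * ∑ i ∈ range N, b i * d i
          - a N * d N * ∑ i ∈ range N, b i * c i
          - b N * c N * ∑ i ∈ range N, a i * d i := by
      simp only [mul_sum, ← sum_add_distrib, ← sum_sub_distrib]
      exact sum_congr rfl fun i _ => by ring
    rw [sum_range_succ
      (fun j => ∑ i ∈ range j, (a i * b j - b i * a j) * (c i * d j - c j * d i)), hlast]
    simp only [sum_range_succ _ N]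
    linear_combination ih

section CatalanLike

variable {R : Type*}

section CommSemiring

variable [CommSemiring R] (s t : ℕ → R)

/-- Aigner's recursive matrix: row `n + 1` is row `n` times `productionMatrix s t`. -/
def catalanLikeTriangle : ℕ → ℕ → R
  | 0, k => if k = 0 then 1 else 0
  | n + 1, 0 => s 0 * catalanLikeTriangle n 0 + t 1 * catalanLikeTriangle n 1
  | n + 1, k + 1 => catalanLikeTriangle n k + s (k + 1) * catalanLikeTriangle n (k + 1)
      + t (k + 2) * catalanLikeTriangle n (k + 2)

def productionMatrix (i k : ℕ) : R :=
  if i + 1 = k then 1 else if i = k then s k else if i = k + 1 then t i else 0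

theorem catalanLikeTriangle_eq_zero_of_lt {n k : ℕ} (h : n < k) :
    catalanLikeTriangle s t n k = 0 := by
  induction n generalizing k with
  | zero => simp [catalanLikeTriangle, h.ne']
  | succ n ih =>
    obtain ⟨k, rfl⟩ := Nat.exists_eq_succ_of_ne_zero (by omega : k ≠ 0)
    simp [catalanLikeTriangle, ih (by omega : n < k), ih (by omega : n < k + 1),
      ih (by omega : n < k + 2)]

theorem catalanLikeTriangle_succ_eq_sum {n N : ℕ} (hN : n < N) (k : ℕ) :
    catalanLikeTriangle s t (n + 1) k
      = ∑ i ∈ range N, productionMatrix s t i k * catalanLikeTriangle s t n i := by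
  have hsplit : ∀ i, productionMatrix s t i k * catalanLikeTriangle s t n i
      = (if i + 1 = k then catalanLikeTriangle s t n i else 0)
        + s k * (if k = i then catalanLikeTriangle s t n i else 0)
        + t (k + 1) * (if k + 1 = i then catalanLikeTriangle s t n i else 0) := fun i => by
    unfold productionMatrix
    split_ifs <;> first | omega | (subst_vars; simp)
  have hvanish : ∀ i, (if i ∈ range N then catalanLikeTriangle s t n i else 0)
      = catalanLikeTriangle s t n i := fun i => by
    rw [ite_eq_left_iff, mem_range, not_lt]
    exact fun hi => (catalanLikeTriangle_eq_zero_of_lt s t (by omega)).symm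
  simp only [hsplit, sum_add_distrib, ← mul_sum, sum_ite_eq, hvanish]
  cases k with
  | zero => simp [catalanLikeTriangle]
  | succ k => simp only [Nat.add_right_cancel_iff, sum_ite_eq', hvanish, catalanLikeTriangle]

end CommSemiring

variable [CommRing R] (P : Subsemiring R) {s t : ℕ → R}

theorem productionMatrix_mem (hs : ∀ k, s k ∈ P) (ht : ∀ k, t k ∈ P)
    (i k : ℕ) : productionMatrix s t i k ∈ P := by
  unfold productionMatrix
  split_ifs
  exacts [P.one_mem, hs k, ht i, P.zero_mem]

theorem productionMatrix_minor_mem (hs : ∀ k, s k ∈ P) (ht : ∀ k, t k ∈ P)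
    (hst : ∀ k, s k * s (k + 1) - t (k + 1) ∈ P)
    {i j k l : ℕ} (hij : i < j) (hkl : k < l) :
    productionMatrix s t i k * productionMatrix s t j l
      - productionMatrix s t i l * productionMatrix s t j k ∈ P := by
  -- only at rows and columns `k, k + 1` are both products of the minor nonzero
  by_cases hdiag : i = k ∧ j = k + 1 ∧ l = k + 1
  · obtain ⟨rfl, rfl, rfl⟩ := hdiag
    simpa [productionMatrix, show i + 1 + 1 ≠ i by omega] using hst i
  · have hzero : productionMatrix s t i l * productionMatrix s t j k = 0 := by
      unfold productionMatrix
      split_ifs <;> first | omega | simp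
    rw [hzero, sub_zero]
    exact P.mul_mem (productionMatrix_mem P hs ht i k) (productionMatrix_mem P hs ht j l)

theorem catalanLikeTriangle_mem (hs : ∀ k, s k ∈ P) (ht : ∀ k, t k ∈ P)
    (n k : ℕ) : catalanLikeTriangle s t n k ∈ P := by
  induction n generalizing k with
  | zero =>
    unfold catalanLikeTriangle
    split_ifs
    exacts [P.one_mem, P.zero_mem]
  | succ n ih =>
    cases k with
    | zero => exact P.add_mem (P.mul_mem (hs 0) (ih 0)) (P.mul_mem (ht 1) (ih 1))
    | succ k =>
      exact P.add_mem (P.add_mem (ih k) (P.mul_mem (hs _) (ih _))) (P.mul_mem (ht _) (ih _))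

theorem catalanLikeTriangle_minor_mem (hs : ∀ k, s k ∈ P) (ht : ∀ k, t k ∈ P)
    (hst : ∀ k, s k * s (k + 1) - t (k + 1) ∈ P)
    (n : ℕ) {k l : ℕ} (hkl : k < l) :
    catalanLikeTriangle s t n k * catalanLikeTriangle s t (n + 1) l
      - catalanLikeTriangle s t n l * catalanLikeTriangle s t (n + 1) k ∈ P := by
  induction n generalizing k l with
  | zero =>
    rw [catalanLikeTriangle_eq_zero_of_lt s t (Nat.zero_lt_of_lt hkl), zero_mul, sub_zero]
    exact P.mul_mem (catalanLikeTriangle_mem P hs ht 0 k) (catalanLikeTriangle_mem P hs ht 1 l)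
  | succ n ih =>
    -- rows `n + 1, n + 2` are rows `n, n + 1` times the production matrix
    have hrow₀ := catalanLikeTriangle_succ_eq_sum s t (n := n) (N := n + 2) (by omega)
    have hrow₁ := catalanLikeTriangle_succ_eq_sum s t (n := n + 1) (N := n + 2) (by omega)
    rw [hrow₀, hrow₀, hrow₁, hrow₁, sum_range_mul_sum_range_sub]
    refine P.sum_mem fun j _ => P.sum_mem fun i hi => P.mul_mem ?_ (ih (mem_range.mp hi))
    exact productionMatrix_minor_mem P hs ht hst (mem_range.mp hi) hkl

theorem catalanLikeTriangle_log_convex (hs : ∀ k, s k ∈ P) (ht : ∀ k, t k ∈ P)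
    (hst : ∀ k, s k * s (k + 1) - t (k + 1) ∈ P) (n : ℕ) :
    catalanLikeTriangle s t (n + 2) 0 * catalanLikeTriangle s t n 0
      - catalanLikeTriangle s t (n + 1) 0 ^ 2 ∈ P := by
  have hminor : catalanLikeTriangle s t (n + 2) 0 * catalanLikeTriangle s t n 0
      - catalanLikeTriangle s t (n + 1) 0 ^ 2
      = t 1 * (catalanLikeTriangle s t n 0 * catalanLikeTriangle s t (n + 1) 1
          - catalanLikeTriangle s t n 1 * catalanLikeTriangle s t (n + 1) 0) := by
    simp only [catalanLikeTriangle]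
    ring
  rw [hminor]
  exact P.mul_mem (ht 1) (catalanLikeTriangle_minor_mem P hs ht hst n zero_lt_one)

end CatalanLike

def Polynomial.nonnegCoeffs_s1 (R : Type*) [Semiring R] [PartialOrder R] [IsOrderedRing R] :
    Subsemiring R[X] where
  carrier := {p | ∀ n, 0 ≤ p.coeff n}
  mul_mem' hp hq n := by
    rw [coeff_mul]
    exact sum_nonneg fun x _ => mul_nonneg (hp x.1) (hq x.2)
  one_mem' n := by
    rw [coeff_one]
    split_ifs <;> simp
  add_mem' hp hq n := by
    rw [coeff_add]
    exact add_nonneg (hp n) (hq n)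
  zero_mem' n := by simp

theorem Polynomial.X_mem_nonnegCoeffs_s1 (R : Type*) [Semiring R] [PartialOrder R]
    [IsOrderedRing R] :
    X ∈ nonnegCoeffs_s1 R := fun n => by
  rw [coeff_X]
  split_ifs <;> simp

noncomputable def narayanaTriangle : ℕ → ℕ → ℚ[X] :=
  catalanLikeTriangle (fun k => if k = 0 then 1 else 1 + X) (fun _ => X)

theorem narayanaTriangle_log_convex (n : ℕ) :
    narayanaTriangle (n + 2) 0 * narayanaTriangle n 0 - narayanaTriangle (n + 1) 0 ^ 2
      ∈ nonnegCoeffs_s1 ℚ := by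
  have hX := X_mem_nonnegCoeffs_s1 ℚ
  refine catalanLikeTriangle_log_convex _ (fun k => ?_) (fun _ => hX) (fun k => ?_) n
  · split_ifs
    exacts [Subsemiring.one_mem _, add_mem (Subsemiring.one_mem _) hX]
  · rcases k with _ | k
    · simp
    · simp only [Nat.add_one_ne_zero, if_false]
      rw [show (1 + X) * (1 + X) - X = 1 + X + X ^ 2 by ring]
      exact add_mem (add_mem (Subsemiring.one_mem _) hX) (pow_mem hX 2)

theorem Nat.cast_choose_succ_mul_succ {R : Type*} [Ring R] (n r : ℕ) :
    (n.choose (r + 1) : R) * (r + 1) = n.choose r * (n - r) := by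
  rcases le_or_gt r n with h | h
  · have := congrArg (Nat.cast (R := R)) (Nat.choose_succ_right_eq n r)
    push_cast [Nat.cast_sub h] at this
    exact this
  · simp [Nat.choose_eq_zero_of_lt h, Nat.choose_eq_zero_of_lt (Nat.lt_succ_of_lt h)]

/-- `n` times the coefficient of `q ^ j` in `narayanaTriangle n k`. -/
def scaledNarayanaCoeff (n k j : ℕ) : ℚ :=
  n.choose j * (k * n.choose (k + j) + (k + 1) * n.choose (k + j + 1))

theorem scaledNarayanaCoeff_succ_zero_succ (n j : ℕ) :
    n * scaledNarayanaCoeff (n + 1) 0 (j + 1)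
      = (n + 1) * (scaledNarayanaCoeff n 0 (j + 1) + scaledNarayanaCoeff n 1 j) := by
  have h₁ := Nat.cast_choose_succ_mul_succ (R := ℚ) n j
  have h₂ := Nat.cast_choose_succ_mul_succ (R := ℚ) n (j + 1)
  refine mul_left_cancel₀ (by positivity : (j : ℚ) + 2 ≠ 0) ?_
  simp only [scaledNarayanaCoeff, zero_add, add_comm 1 j, Nat.choose_succ_succ', Nat.cast_add]
  push_cast at h₂ ⊢
  linear_combination (-(n + 2) * (n.choose j : ℚ) - n.choose (j + 1)) * h₂
    + (n + 1) * (n.choose (j + 1) : ℚ) * h₁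

theorem scaledNarayanaCoeff_succ_succ_zero (n k : ℕ) :
    n * scaledNarayanaCoeff (n + 1) (k + 1) 0
      = (n + 1) * (scaledNarayanaCoeff n k 0 + scaledNarayanaCoeff n (k + 1) 0) := by
  have h₁ := Nat.cast_choose_succ_mul_succ (R := ℚ) n k
  have h₂ := Nat.cast_choose_succ_mul_succ (R := ℚ) n (k + 1)
  simp only [scaledNarayanaCoeff, add_zero, Nat.choose_zero_right, Nat.choose_succ_succ',
    Nat.cast_add]
  push_cast at h₂ ⊢
  linear_combination -h₁ - h₂

theorem scaledNarayanaCoeff_succ_succ_succ (n k j : ℕ) :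
    n * scaledNarayanaCoeff (n + 1) (k + 1) (j + 1)
      = (n + 1) * (scaledNarayanaCoeff n k (j + 1) + scaledNarayanaCoeff n (k + 1) (j + 1)
          + scaledNarayanaCoeff n (k + 1) j + scaledNarayanaCoeff n (k + 2) j) := by
  have h₁ := Nat.cast_choose_succ_mul_succ (R := ℚ) n j
  have h₂ := Nat.cast_choose_succ_mul_succ (R := ℚ) n (k + j + 1)
  have h₃ := Nat.cast_choose_succ_mul_succ (R := ℚ) n (k + j + 2)
  refine mul_left_cancel₀ (by positivity : (j : ℚ) + 1 ≠ 0) ?_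
  simp only [scaledNarayanaCoeff, show k + 1 + (j + 1) = k + j + 2 by ring,
    show k + (j + 1) = k + j + 1 by ring, show k + 1 + j = k + j + 1 by ring,
    show k + 2 + j = k + j + 2 by ring, Nat.choose_succ_succ', Nat.cast_add]
  push_cast at h₂ h₃ ⊢
  linear_combination
    ((n - k) * (n.choose (k + j + 1) : ℚ) + (n - 2 * k - 2) * n.choose (k + j + 2)
        - (k + 2) * n.choose (k + j + 3)) * h₁
      - (n + 1) * (n.choose j : ℚ) * h₂ - (n + 1) * (n.choose j : ℚ) * h₃

noncomputable def scaledNarayana (n k : ℕ) : ℚ[X] :=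
  ∑ j ∈ range (n + 1), C (scaledNarayanaCoeff n k j) * X ^ j

theorem coeff_scaledNarayana (n k j : ℕ) :
    (scaledNarayana n k).coeff j = scaledNarayanaCoeff n k j := by
  simp only [scaledNarayana, finsetSum_coeff, coeff_C_mul_X_pow, sum_ite_eq, mem_range]
  split_ifs with h
  · rfl
  · simp [scaledNarayanaCoeff, Nat.choose_eq_zero_of_lt (not_lt.mp h)]

theorem scaledNarayana_succ_zero (n : ℕ) :
    (n : ℚ[X]) * scaledNarayana (n + 1) 0
      = (n + 1 : ℚ[X]) * (scaledNarayana n 0 + X * scaledNarayana n 1) := by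
  ext (_ | j) <;> simp only [coeff_natCast_mul, add_mul, one_mul, coeff_add, coeff_X_mul_zero,
    coeff_X_mul, coeff_scaledNarayana]
  · simp only [scaledNarayanaCoeff, Nat.choose_zero_right, Nat.choose_one_right, Nat.cast_one,
      CharP.cast_eq_zero, Nat.cast_add, add_zero, zero_add, mul_one, one_mul]
    ring
  · linear_combination scaledNarayanaCoeff_succ_zero_succ n j

theorem scaledNarayana_succ_succ (n k : ℕ) :
    (n : ℚ[X]) * scaledNarayana (n + 1) (k + 1) = (n + 1 : ℚ[X]) *
      (scaledNarayana n k + (1 + X) * scaledNarayana n (k + 1)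
        + X * scaledNarayana n (k + 2)) := by
  ext (_ | j) <;> simp only [coeff_natCast_mul, add_mul, one_mul, coeff_add, coeff_X_mul_zero,
    coeff_X_mul, coeff_scaledNarayana]
  · linear_combination scaledNarayanaCoeff_succ_succ_zero n k
  · linear_combination scaledNarayanaCoeff_succ_succ_succ n k j

theorem narayanaTriangle_succ_zero (n : ℕ) :
    narayanaTriangle (n + 1) 0 = narayanaTriangle n 0 + X * narayanaTriangle n 1 := by
  simp [narayanaTriangle, catalanLikeTriangle]

theorem narayanaTriangle_succ_succ (n k : ℕ) :
    narayanaTriangle (n + 1) (k + 1)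
      = narayanaTriangle n k + (1 + X) * narayanaTriangle n (k + 1)
        + X * narayanaTriangle n (k + 2) := by
  simp [narayanaTriangle, catalanLikeTriangle]

theorem scaledNarayana_one (k : ℕ) : scaledNarayana 1 k = narayanaTriangle 1 k := by
  ext j
  rw [coeff_scaledNarayana]
  rcases k with _ | _ | k <;> rcases j with _ | _ | j <;>
    simp [narayanaTriangle, catalanLikeTriangle, scaledNarayanaCoeff, coeff_one,
      Nat.choose_succ_succ']

theorem natCast_succ_mul_narayanaTriangle (n k : ℕ) :
    (n + 1 : ℚ[X]) * narayanaTriangle (n + 1) k = scaledNarayana (n + 1) k := by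
  induction n generalizing k with
  | zero => simp [scaledNarayana_one]
  | succ n ih =>
    refine mul_left_cancel₀ (Nat.cast_add_one_ne_zero n) ?_
    push_cast
    rcases k with _ | k
    · have hrec := scaledNarayana_succ_zero (n + 1)
      push_cast at hrec
      rw [narayanaTriangle_succ_zero]
      linear_combination (n + 1 + 1 : ℚ[X]) * (ih 0 + X * ih 1) - hrec
    · have hrec := scaledNarayana_succ_succ (n + 1) k
      push_cast at hrec
      rw [narayanaTriangle_succ_succ]
      linear_combination
        (n + 1 + 1 : ℚ[X]) * (ih k + (1 + X) * ih (k + 1) + X * ih (k + 2)) - hrec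

theorem natCast_succ_mul_narayanaPoly (n : ℕ) :
    (n + 1 : ℚ[X]) * narayanaPoly (n + 1) = scaledNarayana (n + 1) 0 := by
  rw [narayanaPoly, if_neg n.succ_ne_zero, scaledNarayana, mul_sum]
  refine sum_congr rfl fun j _ => ?_
  rw [← mul_assoc, show (n + 1 : ℚ[X]) = C ((n + 1 : ℕ) : ℚ) by simp, ← C_mul]
  congr 2
  simp only [Nat.cast_add, Nat.cast_one, scaledNarayanaCoeff, CharP.cast_eq_zero, zero_add,
    zero_mul, one_mul]
  field_simp

theorem narayanaPoly_eq_narayanaTriangle (n : ℕ) : narayanaPoly n = narayanaTriangle n 0 := by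
  rcases n with _ | n
  · simp [narayanaPoly, narayanaTriangle, catalanLikeTriangle]
  · refine mul_left_cancel₀ (Nat.cast_add_one_ne_zero n) ?_
    rw [natCast_succ_mul_narayanaPoly, natCast_succ_mul_narayanaTriangle]

theorem narayana_q_log_convex_general (m : ℕ) (r : ℕ) :
    0 ≤ (narayanaPoly (m + 1) * narayanaPoly (m - 1) - narayanaPoly m ^ 2).coeff r := by
  simp only [narayanaPoly_eq_narayanaTriangle]
  rcases m with _ | n
  -- `0 - 1 = 0` in `ℕ`, so this is `N_1 N_0 - N_0 ^ 2 = 0`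
  · simp [narayanaTriangle, catalanLikeTriangle]
  · exact narayanaTriangle_log_convex n r

/-- The Narayana polynomials form a `q`-log-convex sequence: for `m ≥ 1`
every coefficient of `N_{m+1}(q) N_{m-1}(q) - N_m(q)^2` is nonnegative. -/
theorem narayana_q_log_convex (m : ℕ) (hm : 1 ≤ m) (r : ℕ) :
    0 ≤ (narayanaPoly (m + 1) * narayanaPoly (m - 1) - narayanaPoly m ^ 2).coeff r :=
  narayana_q_log_convex_general m r
end

section
/- Let k ≥ 1 and n > 1 be integers, and write ps_n(f) for the evaluation f(1, q, q^2, …, q^{n−1}) of a symmetric polynomial f in n variables, as a polynomial in q. Then: (a) ps_n(s_{(2^k)}) = ps_{n−1}(s_{(2^k)}) + q^{n−1}·ps_{n−1}(s_{(2^{k−1},1)}) + q^{2(n−1)}·ps_{n−1}(s_{(2^{k−1})}); and (b) ps_n(s_{(2^k,1)}) = ps_{n−1}(s_{(2^k,1)}) + q^{n−1}·ps_{n−1}(s_{(2^k)} + s_{(2^{k−1},1^2)}) + q^{2(n−1)}·ps_{n−1}(s_{(2^{k−1},1)}). -/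
open MvPolynomial

/-- Semistandard Young tableaux of shape `μ` with all entries < `N`
(entries `0,…,N-1` playing the role of `1,…,N`). -/
def BddSsyt (μ : YoungDiagram) (N : ℕ) : Type :=
  {T : SemistandardYoungTableau μ // ∀ c ∈ μ.cells, T c.1 c.2 < N}

noncomputable instance (μ : YoungDiagram) (N : ℕ) : Fintype (BddSsyt μ N) :=
  Fintype.ofInjective
    (fun (T : BddSsyt μ N) (c : μ.cells) => (⟨T.1 c.1.1 c.1.2, T.2 c.1 c.2⟩ : Fin N))
    (by
      intro T₁ T₂ h
      apply Subtype.ext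
      ext i j
      by_cases hij : (i, j) ∈ μ
      · exact congrArg Fin.val (congrFun h ⟨(i, j), (YoungDiagram.mem_cells _).mpr hij⟩)
      · rw [T₁.1.zeros hij, T₂.1.zeros hij])

/-- The Schur polynomial of a Young diagram `μ` in `N` variables, defined as the
generating function of semistandard Young tableaux of shape `μ` with entries in `{0,…,N-1}`. -/
noncomputable def schurYD (N : ℕ) (μ : YoungDiagram) : MvPolynomial (Fin N) ℤ :=
  ∑ T : BddSsyt μ N, ∏ c ∈ μ.cells.attach,
    X (⟨T.1 c.1.1 c.1.2, T.2 c.1 c.2⟩ : Fin N)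

/-- The Young diagram whose rows are the parts of the multiset `m` (in decreasing order). -/
def ydOf (m : Multiset ℕ) : YoungDiagram :=
  YoungDiagram.ofRowLens (m.sort (· ≥ ·)) (m.pairwise_sort _).sortedGE

/-- The Schur polynomial in `N` variables of the partition with parts `m`. -/
noncomputable def schur (N : ℕ) (m : Multiset ℕ) : MvPolynomial (Fin N) ℤ :=
  schurYD N (ydOf m)

/-- The partition `(2^a, 1^b)`. -/
def twoOne (a b : ℕ) : Multiset ℕ :=
  Multiset.replicate a 2 + Multiset.replicate b 1

/-- The Schur polynomial of `(2^a, 1^b)` with integer indices, with the convention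
that it is `0` whenever `a < 0` or `b < 0`. -/
noncomputable def schurZ (N : ℕ) (a b : ℤ) : MvPolynomial (Fin N) ℤ :=
  if 0 ≤ a ∧ 0 ≤ b then schur N (twoOne a.toNat b.toNat) else 0

/-- A family of symmetric polynomials (one for each number `N` of variables) is Schur-positive
if it is a fixed nonnegative integer combination of Schur polynomials, uniformly in `N`. -/
def SchurPos (F : (N : ℕ) → MvPolynomial (Fin N) ℤ) : Prop :=
  ∃ c : Multiset ℕ →₀ ℕ, ∀ N : ℕ, 1 ≤ N →
    F N = ∑ μ ∈ c.support, (c μ) • schur N μ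

def SchurNeg (F : (N : ℕ) → MvPolynomial (Fin N) ℤ) : Prop :=
  SchurPos (fun N => -F N)

/-- `μ ∪ 4^a ∪ (3,1)^b ∪ (2,2)^c` as a multiset of parts. -/
def qForm (μ : Multiset ℕ) (t : ℕ × ℕ × ℕ) : Multiset ℕ :=
  μ + Multiset.replicate t.1 4 + Multiset.replicate t.2.1 3
    + Multiset.replicate t.2.1 1 + Multiset.replicate (2 * t.2.2) 2

/-- The set `Q_μ(M)` of all partitions of `M` of the form `μ ∪ 4^a ∪ (3,1)^b ∪ (2,2)^c`. -/
def Qset (μ : Multiset ℕ) (M : ℕ) : Finset (Multiset ℕ) :=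
  Finset.image (qForm μ)
    ((Finset.range (M + 1) ×ˢ Finset.range (M + 1) ×ˢ Finset.range (M + 1)).filter
      (fun t => (qForm μ t).sum = M))

/-- The principal specialization `ps_n(f) = f(1, q, q^2, …, q^{n-1})` of a symmetric
polynomial in `n` variables, as a polynomial in `q`. -/
noncomputable def psn (n : ℕ) (f : MvPolynomial (Fin n) ℤ) : Polynomial ℤ :=
  MvPolynomial.aeval (fun i : Fin n => (Polynomial.X : Polynomial ℤ) ^ (i : ℕ)) f

/-!
Principal specialisation turns `s_ν(1, q, …, q^N)` into the generating function
`∑_T q^{|T|}` of tableaux of shape `ν` with entries in `{0, …, N}`. In such a tableau the cells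
holding the largest entry `N` form a horizontal strip `ν/μ`, and deleting them leaves an
arbitrary tableau of shape `μ` with entries below `N`; so the tableaux whose `N`'s fill exactly
`ν/μ` contribute `q^{N |ν/μ|} ps_N(s_μ)`. For `ν = (2^a, 1^b)` the strip is determined by
whether the bottom cell of each of the two columns holds `N`, which leaves the four shapes
`(2^a, 1^b)`, `(2^{a-1}, 1^{b+1})`, `(2^a, 1^{b-1})` and `(2^{a-1}, 1^b)`. The patterns
that would give a negative exponent (`N` in column 1 when `a = 0`, or `N` in column 0 alone
when `b = 0`) occur in no tableau, which is the convention `s = 0` for such shapes.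
-/

local notation "q" => (Polynomial.X : Polynomial ℤ)

namespace YoungDiagram

def IsHorizontalStrip (μ ν : YoungDiagram) : Prop :=
  μ ≤ ν ∧ ∀ j, ν.colLen j ≤ μ.colLen j + 1

theorem IsHorizontalStrip.mem_of_lt {μ ν : YoungDiagram} (h : μ.IsHorizontalStrip ν)
    {i₁ i₂ j : ℕ} (hi : i₁ < i₂) (hν : (i₂, j) ∈ ν) (hμ : (i₂, j) ∉ μ) : (i₁, j) ∈ μ := by
  have := h.2 j
  have hν' := mem_iff_lt_colLen.1 hν
  have hμ' : ¬i₂ < μ.colLen j := fun hlt => hμ (mem_iff_lt_colLen.2 hlt)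
  exact mem_iff_lt_colLen.2 (by omega)

theorem colLen_le_colLen {μ ν : YoungDiagram} (h : μ ≤ ν) (j : ℕ) : μ.colLen j ≤ ν.colLen j := by
  by_contra! hlt
  exact lt_irrefl _ (mem_iff_lt_colLen.1 (h (mem_iff_lt_colLen.2 hlt)))

end YoungDiagram

def SemistandardYoungTableau.restrict {μ ν : YoungDiagram} (h : μ ≤ ν)
    (T : SemistandardYoungTableau ν) : SemistandardYoungTableau μ where
  entry i j := if (i, j) ∈ μ then T i j else 0
  row_weak' hj hc := by
    rw [if_pos hc, if_pos (μ.up_left_mem le_rfl hj.le hc)]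
    exact T.row_weak hj (h hc)
  col_strict' hi hc := by
    rw [if_pos hc, if_pos (μ.up_left_mem hi.le le_rfl hc)]
    exact T.col_strict hi (h hc)
  zeros' hc := if_neg hc

theorem SemistandardYoungTableau.restrict_apply {μ ν : YoungDiagram} (h : μ ≤ ν)
    (T : SemistandardYoungTableau ν) (i j : ℕ) :
    T.restrict h i j = if (i, j) ∈ μ then T i j else 0 := rfl

theorem psn_zero (n : ℕ) : psn n 0 = 0 := map_zero _

theorem psn_add (n : ℕ) (f g : MvPolynomial (Fin n) ℤ) : psn n (f + g) = psn n f + psn n g :=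
  map_add _ f g

namespace BddSsyt

variable {μ ν : YoungDiagram} {N : ℕ}

def weight (T : BddSsyt ν N) : ℕ := ∑ c ∈ ν.cells, T.1 c.1 c.2

theorem _root_.psn_schurYD_eq_sum (N : ℕ) (ν : YoungDiagram) :
    psn N (schurYD N ν) = ∑ T : BddSsyt ν N, q ^ T.weight := by
  rw [psn, schurYD, map_sum]
  refine Finset.sum_congr rfl fun T _ => ?_
  simp only [map_prod, MvPolynomial.aeval_X, Finset.prod_pow_eq_pow_sum]
  rw [weight, ← Finset.sum_attach ν.cells (fun c => T.1 c.1 c.2)]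

theorem entry_lt (T : BddSsyt ν N) {i j : ℕ} (h : (i, j) ∈ ν) : T.1 i j < N :=
  T.2 (i, j) ((YoungDiagram.mem_cells _).2 h)

theorem entry_lt_of_lt (T : BddSsyt ν (N + 1)) {i i' j : ℕ} (hi : i < i') (h : (i', j) ∈ ν) :
    T.1 i j < N :=
  (T.1.col_strict hi h).trans_le (Nat.lt_succ_iff.1 (T.entry_lt h))

theorem colLen_le_succ_of_entry_eq (T : BddSsyt ν (N + 1)) {i j : ℕ} (hT : T.1 i j = N) :
    ν.colLen j ≤ i + 1 := by
  by_contra! hlt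
  exact (T.entry_lt_of_lt (Nat.lt_succ_self i) (YoungDiagram.mem_iff_lt_colLen.2 hlt)).ne hT

def MaxEntriesOutside (T : BddSsyt ν (N + 1)) (μ : YoungDiagram) : Prop :=
  ∀ c ∈ ν.cells, (T.1 c.1 c.2 = N ↔ c ∉ μ)

instance (T : BddSsyt ν (N + 1)) (μ : YoungDiagram) : Decidable (T.MaxEntriesOutside μ) := by
  unfold MaxEntriesOutside; infer_instance

def restrict (h : μ ≤ ν) (T : BddSsyt ν (N + 1)) (hT : T.MaxEntriesOutside μ) : BddSsyt μ N :=
  ⟨T.1.restrict h, fun ⟨i, j⟩ hc => by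
    rw [YoungDiagram.mem_cells] at hc
    have hν := h hc
    have hne : T.1 i j ≠ N := fun hN => (hT (i, j) ((YoungDiagram.mem_cells _).2 hν)).1 hN hc
    have := T.entry_lt hν
    show T.1.restrict h i j < N
    rw [SemistandardYoungTableau.restrict_apply, if_pos hc]
    omega⟩

def extend (h : μ.IsHorizontalStrip ν) (T : BddSsyt μ N) : BddSsyt ν (N + 1) :=
  ⟨{ entry i j := if (i, j) ∈ μ then T.1 i j else if (i, j) ∈ ν then N else 0
     row_weak' := fun {i j₁ j₂} hj hc => by
       by_cases hμ : (i, j₂) ∈ μ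
       · rw [if_pos hμ, if_pos (μ.up_left_mem le_rfl hj.le hμ)]
         exact T.1.row_weak hj hμ
       · rw [if_neg hμ, if_pos hc]
         split_ifs with h₁ h₂
         · exact (T.entry_lt h₁).le
         · exact le_rfl
         · exact absurd (ν.up_left_mem le_rfl hj.le hc) h₂
     col_strict' := fun {i₁ i₂ j} hi hc => by
       have hμ₁ : (i₁, j) ∈ μ := by
         by_cases hμ : (i₂, j) ∈ μ
         · exact μ.up_left_mem hi.le le_rfl hμ
         · exact h.mem_of_lt hi hc hμ
       rw [if_pos hμ₁]
       split_ifs with hμ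
       · exact T.1.col_strict hi hμ
       · exact T.entry_lt hμ₁
     zeros' := fun {i j} hc => by
       rw [if_neg (fun hμ => hc (h.1 hμ)), if_neg hc] },
   fun ⟨i, j⟩ hc => by
    rw [YoungDiagram.mem_cells] at hc
    show (if (i, j) ∈ μ then T.1 i j else if (i, j) ∈ ν then N else 0) < N + 1
    split_ifs with hμ
    · exact (T.entry_lt hμ).trans (Nat.lt_succ_self N)
    · exact Nat.lt_succ_self N⟩

theorem extend_apply (h : μ.IsHorizontalStrip ν) (T : BddSsyt μ N) (i j : ℕ) :
    (extend h T).1 i j = if (i, j) ∈ μ then T.1 i j else if (i, j) ∈ ν then N else 0 := rfl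

theorem restrict_apply (h : μ ≤ ν) (T : BddSsyt ν (N + 1)) (hT : T.MaxEntriesOutside μ)
    (i j : ℕ) : (restrict h T hT).1 i j = if (i, j) ∈ μ then T.1 i j else 0 := rfl

theorem extend_maxEntriesOutside (h : μ.IsHorizontalStrip ν) (T : BddSsyt μ N) :
    (extend h T).MaxEntriesOutside μ := by
  rintro ⟨i, j⟩ hc
  rw [YoungDiagram.mem_cells] at hc
  rw [extend_apply]
  by_cases hμ : (i, j) ∈ μ
  · rw [if_pos hμ]
    exact iff_of_false (T.entry_lt hμ).ne (not_not.2 hμ)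
  · simp [hμ, hc]

theorem extend_restrict (h : μ.IsHorizontalStrip ν) (T : BddSsyt ν (N + 1))
    (hT : T.MaxEntriesOutside μ) : extend h (restrict h.1 T hT) = T := by
  refine Subtype.ext (SemistandardYoungTableau.ext fun i j => ?_)
  rw [extend_apply, restrict_apply]
  by_cases hμ : (i, j) ∈ μ
  · rw [if_pos hμ, if_pos hμ]
  · rw [if_neg hμ]
    split_ifs with hν
    · exact ((hT (i, j) ((YoungDiagram.mem_cells _).2 hν)).2 hμ).symm
    · exact (T.1.zeros hν).symm

theorem restrict_extend (h : μ.IsHorizontalStrip ν) (T : BddSsyt μ N) :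
    restrict h.1 (extend h T) (extend_maxEntriesOutside h T) = T := by
  refine Subtype.ext (SemistandardYoungTableau.ext fun i j => ?_)
  rw [restrict_apply, extend_apply]
  split_ifs with hμ
  · rfl
  · exact (T.1.zeros hμ).symm

theorem weight_eq_of_maxEntriesOutside (h : μ ≤ ν) (T : BddSsyt ν (N + 1))
    (hT : T.MaxEntriesOutside μ) :
    T.weight = N * (ν.cells \ μ.cells).card + (restrict h T hT).weight := by
  have hsub : μ.cells ⊆ ν.cells := YoungDiagram.cells_subset_iff.2 h
  rw [weight, weight, ← Finset.sum_sdiff hsub, mul_comm, ← smul_eq_mul, ← Finset.sum_const]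
  congr 1
  · refine Finset.sum_congr rfl fun c hc => ?_
    rw [Finset.mem_sdiff, YoungDiagram.mem_cells] at hc
    exact (hT c hc.1).2 hc.2
  · refine Finset.sum_congr rfl fun c hc => ?_
    rw [YoungDiagram.mem_cells] at hc
    show _ = (restrict h T hT).1 c.1 c.2
    rw [restrict_apply, if_pos hc]

theorem sum_filter_maxEntriesOutside (h : μ.IsHorizontalStrip ν) :
    ∑ T : BddSsyt ν (N + 1) with T.MaxEntriesOutside μ, q ^ T.weight
      = q ^ (N * (ν.cells \ μ.cells).card) * psn N (schurYD N μ) := by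
  rw [psn_schurYD_eq_sum, Finset.mul_sum]
  refine Finset.sum_bij' (fun T hT => restrict h.1 T (Finset.mem_filter.1 hT).2)
    (fun T _ => extend h T) (fun _ _ => Finset.mem_univ _)
    (fun T _ => Finset.mem_filter.2 ⟨Finset.mem_univ _, extend_maxEntriesOutside h T⟩)
    (fun T _ => extend_restrict h T _) (fun T _ => restrict_extend h T) (fun T hT => ?_)
  rw [← pow_add, weight_eq_of_maxEntriesOutside h.1]

def hasMaxInCol (T : BddSsyt ν (N + 1)) (j : ℕ) : Bool :=
  decide (∃ i < ν.colLen j, T.1 i j = N)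

theorem hasMaxInCol_iff_of_maxEntriesOutside {T : BddSsyt ν (N + 1)}
    (hT : T.MaxEntriesOutside μ) (j : ℕ) : T.hasMaxInCol j ↔ μ.colLen j < ν.colLen j := by
  rw [hasMaxInCol, decide_eq_true_iff]
  constructor
  · rintro ⟨i, hi, hTi⟩
    have hμ := (hT (i, j) ((YoungDiagram.mem_cells _).2
      (YoungDiagram.mem_iff_lt_colLen.2 hi))).1 hTi
    rw [YoungDiagram.mem_iff_lt_colLen] at hμ
    omega
  · intro hlt
    refine ⟨μ.colLen j, hlt, (hT _ ((YoungDiagram.mem_cells _).2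
      (YoungDiagram.mem_iff_lt_colLen.2 hlt))).2 fun hμ => ?_⟩
    exact lt_irrefl _ (YoungDiagram.mem_iff_lt_colLen.1 hμ)

theorem maxEntriesOutside_iff (h : μ.IsHorizontalStrip ν) (T : BddSsyt ν (N + 1)) :
    T.MaxEntriesOutside μ ↔ ∀ j, (T.hasMaxInCol j).toNat = ν.colLen j - μ.colLen j := by
  constructor
  · intro hT j
    have hiff := hasMaxInCol_iff_of_maxEntriesOutside hT j
    have := h.2 j
    have := YoungDiagram.colLen_le_colLen h.1 j
    by_cases hlt : μ.colLen j < ν.colLen j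
    · rw [hiff.2 hlt, Bool.toNat_true]
      omega
    · rw [Bool.eq_false_iff.2 (mt hiff.1 hlt), Bool.toNat_false]
      omega
  · rintro hlen ⟨i, j⟩ hc
    dsimp only
    rw [YoungDiagram.mem_cells, YoungDiagram.mem_iff_lt_colLen] at hc
    rw [YoungDiagram.mem_iff_lt_colLen, not_lt]
    have hj := hlen j
    have := h.2 j
    constructor
    · intro hTi
      have := T.colLen_le_succ_of_entry_eq hTi
      rw [show T.hasMaxInCol j = true from decide_eq_true ⟨i, hc, hTi⟩, Bool.toNat_true] at hj
      omega
    · intro hle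
      have hone : (T.hasMaxInCol j).toNat = 1 := by omega
      obtain ⟨i₀, hi₀, hT₀⟩ := of_decide_eq_true (Bool.toNat_eq_one.1 hone)
      have := T.colLen_le_succ_of_entry_eq hT₀
      obtain rfl : i = i₀ := by omega
      exact hT₀

theorem hasMaxInCol_of_le (T : BddSsyt ν (N + 1)) {j j' : ℕ} (hj : j ≤ j')
    (hlen : ν.colLen j' = ν.colLen j) (hT : T.hasMaxInCol j) : T.hasMaxInCol j' := by
  obtain ⟨i, hi, hTi⟩ := of_decide_eq_true hT
  have hi' : (i, j') ∈ ν := YoungDiagram.mem_iff_lt_colLen.2 (hlen ▸ hi)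
  refine decide_eq_true ⟨i, hlen ▸ hi, le_antisymm (Nat.lt_succ_iff.1 (T.entry_lt hi')) ?_⟩
  exact hTi.symm.le.trans (T.1.row_weak_of_le hj hi')

theorem toNat_hasMaxInCol_le_colLen (T : BddSsyt ν (N + 1)) (j : ℕ) :
    (T.hasMaxInCol j).toNat ≤ ν.colLen j := by
  cases h : T.hasMaxInCol j
  · exact Nat.zero_le _
  · obtain ⟨i, hi, -⟩ := of_decide_eq_true h
    exact Nat.one_le_of_lt hi

end BddSsyt

theorem sort_twoOne (a b : ℕ) :
    (twoOne a b).sort (· ≥ ·) = List.replicate a 2 ++ List.replicate b 1 := by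
  have hperm : (((twoOne a b).sort (· ≥ ·) : List ℕ) : Multiset ℕ)
      = ((List.replicate a 2 ++ List.replicate b 1 : List ℕ) : Multiset ℕ) := by
    rw [Multiset.sort_eq, ← Multiset.coe_add, Multiset.coe_replicate, Multiset.coe_replicate]
    rfl
  refine List.Perm.eq_of_pairwise' (Multiset.pairwise_sort _ _) ?_ (Quotient.exact hperm)
  rw [List.pairwise_append]
  refine ⟨List.pairwise_replicate.2 (by omega), List.pairwise_replicate.2 (by omega), ?_⟩
  intro x hx y hy
  rw [List.eq_of_mem_replicate hx, List.eq_of_mem_replicate hy]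
  omega

theorem mem_ydOf_twoOne {a b i j : ℕ} :
    (i, j) ∈ ydOf (twoOne a b) ↔ (j = 0 ∧ i < a + b) ∨ (j = 1 ∧ i < a) := by
  rw [ydOf, YoungDiagram.mem_ofRowLens]
  simp only [sort_twoOne, List.length_append, List.length_replicate, List.getElem_append,
    List.getElem_replicate]
  constructor
  · rintro ⟨h, hj⟩
    split_ifs at hj <;> omega
  · intro h
    refine ⟨by omega, ?_⟩
    split_ifs <;> omega

theorem colLen_ydOf_twoOne (a b j : ℕ) :
    (ydOf (twoOne a b)).colLen j = if j = 0 then a + b else if j = 1 then a else 0 := by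
  refine eq_of_forall_lt_iff fun i => ?_
  rw [← YoungDiagram.mem_iff_lt_colLen, mem_ydOf_twoOne]
  split_ifs <;> omega

theorem card_cells_ydOf_twoOne (a b : ℕ) : (ydOf (twoOne a b)).cells.card = 2 * a + b := by
  have hcells :
      (ydOf (twoOne a b)).cells = Finset.range (a + b) ×ˢ {0} ∪ Finset.range a ×ˢ {1} := by
    ext ⟨i, j⟩
    simp only [YoungDiagram.mem_cells, mem_ydOf_twoOne, Finset.mem_union, Finset.mem_product,
      Finset.mem_range, Finset.mem_singleton]
    omega
  rw [hcells, Finset.card_union_of_disjoint (by simp [Finset.disjoint_left]),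
    Finset.card_product, Finset.card_product]
  simp only [Finset.card_range, Finset.card_singleton]
  ring

theorem isHorizontalStrip_ydOf_twoOne {a b a' b' : ℕ} (ha : a' ≤ a) (ha' : a ≤ a' + 1)
    (hab : a' + b' ≤ a + b) (hab' : a + b ≤ a' + b' + 1) :
    (ydOf (twoOne a' b')).IsHorizontalStrip (ydOf (twoOne a b)) := by
  refine ⟨fun ⟨i, j⟩ hc => ?_, fun j => ?_⟩
  · rw [mem_ydOf_twoOne] at hc ⊢
    omega
  · simp only [colLen_ydOf_twoOne]
    split_ifs <;> omega

namespace BddSsyt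

variable {a b N : ℕ}

theorem toNat_hasMaxInCol_zero_le_twoOne (T : BddSsyt (ydOf (twoOne a b)) (N + 1)) :
    (T.hasMaxInCol 0).toNat ≤ b + (T.hasMaxInCol 1).toNat := by
  rcases Nat.eq_zero_or_pos b with rfl | hb
  · cases h : T.hasMaxInCol 0
    · exact Nat.zero_le _
    · rw [T.hasMaxInCol_of_le zero_le_one (by simp [colLen_ydOf_twoOne]) h]
      rfl
  · exact (Bool.toNat_le _).trans (hb.trans_le (Nat.le_add_right _ _))

theorem maxEntriesOutside_twoOne_iff (T : BddSsyt (ydOf (twoOne a b)) (N + 1)) {e₀ e₁ : Bool}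
    (h₁ : e₁.toNat ≤ a) (h₀ : e₀.toNat ≤ b + e₁.toNat) :
    T.MaxEntriesOutside (ydOf (twoOne (a - e₁.toNat) (b + e₁.toNat - e₀.toNat)))
      ↔ (T.hasMaxInCol 0, T.hasMaxInCol 1) = (e₀, e₁) := by
  have toNat_inj : ∀ b c : Bool, b.toNat = c.toNat ↔ b = c := by decide
  have := e₀.toNat_le
  have := e₁.toNat_le
  rw [maxEntriesOutside_iff (isHorizontalStrip_ydOf_twoOne (by omega) (by omega) (by omega)
    (by omega)), Prod.mk.injEq, ← toNat_inj, ← toNat_inj]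
  constructor
  · intro h
    have h0 := h 0
    have h1 := h 1
    simp only [colLen_ydOf_twoOne, one_ne_zero, ↓reduceIte] at h0 h1
    omega
  · rintro ⟨h0, h1⟩ j
    have := T.toNat_hasMaxInCol_le_colLen j
    simp only [colLen_ydOf_twoOne] at this ⊢
    split_ifs at this ⊢ with hj₀ hj₁ <;> subst_vars <;> omega

theorem sum_filter_hasMaxInCol_twoOne (a b N : ℕ) (e₀ e₁ : Bool) :
    ∑ T : BddSsyt (ydOf (twoOne a b)) (N + 1) with (T.hasMaxInCol 0, T.hasMaxInCol 1) = (e₀, e₁),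
        q ^ T.weight
      = q ^ (N * (e₀.toNat + e₁.toNat)) *
          psn N (schurZ N (a - e₁.toNat) (b + e₁.toNat - e₀.toNat)) := by
  by_cases hvalid : e₁.toNat ≤ a ∧ e₀.toNat ≤ b + e₁.toNat
  · obtain ⟨h₁, h₀⟩ := hvalid
    have := e₀.toNat_le
    have := e₁.toNat_le
    have hstrip := isHorizontalStrip_ydOf_twoOne (a := a) (b := b) (a' := a - e₁.toNat)
      (b' := b + e₁.toNat - e₀.toNat) (by omega) (by omega) (by omega) (by omega)
    have hZ : schurZ N (a - e₁.toNat) (b + e₁.toNat - e₀.toNat)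
        = schur N (twoOne (a - e₁.toNat) (b + e₁.toNat - e₀.toNat)) := by
      rw [schurZ, if_pos (by omega)]
      congr <;> omega
    have hcard : e₀.toNat + e₁.toNat = ((ydOf (twoOne a b)).cells \
        (ydOf (twoOne (a - e₁.toNat) (b + e₁.toNat - e₀.toNat))).cells).card := by
      rw [Finset.card_sdiff_of_subset (YoungDiagram.cells_subset_iff.2 hstrip.1),
        card_cells_ydOf_twoOne, card_cells_ydOf_twoOne]
      omega
    rw [hZ, schur, hcard, ← sum_filter_maxEntriesOutside hstrip]
    exact Finset.sum_congr
      (Finset.filter_congr fun T _ => (T.maxEntriesOutside_twoOne_iff h₁ h₀).symm) fun _ _ => rfl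
  · rw [schurZ, if_neg (by omega), psn_zero, mul_zero]
    refine Finset.sum_eq_zero fun T hT => absurd hT ?_
    rw [Finset.mem_filter, Prod.mk.injEq, not_and]
    rintro - ⟨rfl, rfl⟩
    have h₁ := T.toNat_hasMaxInCol_le_colLen 1
    rw [colLen_ydOf_twoOne] at h₁
    exact hvalid ⟨h₁, T.toNat_hasMaxInCol_zero_le_twoOne⟩

end BddSsyt

theorem psn_schur_twoOne_succ (a b N : ℕ) :
    psn (N + 1) (schur (N + 1) (twoOne a b))
      = psn N (schurZ N a b)
        + q ^ N * (psn N (schurZ N (a - 1) (b + 1)) + psn N (schurZ N a (b - 1)))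
        + q ^ (2 * N) * psn N (schurZ N (a - 1) b) := by
  rw [schur, psn_schurYD_eq_sum, ← Finset.sum_fiberwise Finset.univ
    (fun T : BddSsyt _ _ => (T.hasMaxInCol 0, T.hasMaxInCol 1))]
  simp only [Fintype.sum_prod_type, Fintype.sum_bool, BddSsyt.sum_filter_hasMaxInCol_twoOne,
    Bool.toNat_true, Bool.toNat_false, Nat.cast_zero, Nat.cast_one, sub_zero, add_zero, mul_one,
    add_sub_cancel_right, zero_add]
  ring

/-- Recurrences for the principal specializations of `s_{(2^k)}` and `s_{(2^k,1)}`. -/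
theorem psn_schur_recurrences (k n : ℕ) (hk : 1 ≤ k) (hn : 1 < n) :
    (psn n (schur n (twoOne k 0))
        = psn (n - 1) (schur (n - 1) (twoOne k 0))
          + Polynomial.X ^ (n - 1) * psn (n - 1) (schur (n - 1) (twoOne (k - 1) 1))
          + Polynomial.X ^ (2 * (n - 1)) * psn (n - 1) (schur (n - 1) (twoOne (k - 1) 0)))
    ∧
    (psn n (schur n (twoOne k 1))
        = psn (n - 1) (schur (n - 1) (twoOne k 1))
          + Polynomial.X ^ (n - 1) *
              psn (n - 1) (schur (n - 1) (twoOne k 0) + schur (n - 1) (twoOne (k - 1) 2))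
          + Polynomial.X ^ (2 * (n - 1)) * psn (n - 1) (schur (n - 1) (twoOne (k - 1) 1))) := by
  obtain ⟨m, rfl⟩ : ∃ m, k = m + 1 := ⟨k - 1, by omega⟩
  obtain ⟨N, rfl⟩ : ∃ N, n = N + 1 := ⟨n - 1, by omega⟩
  have hm : (0 : ℤ) ≤ m + 1 := by positivity
  simp only [Nat.add_sub_cancel, psn_schur_twoOne_succ]
  simp [schurZ, psn_add, psn_zero, hm, add_comm]
end

section
/- Fix integers n ≥ 1 and 0 ≤ r < 2n. Define real functions f₁(x) = (n+1)(n−x+1)(n−x)²(n−x−1), f₂(x) = (n+1)(n−(r−x)+1)(n−(r−x))²(n−(r−x)−1), f₃(x) = (n−1)(n−x)(n−x+1)(n−(r−x))(n−(r−x)+1), and f(x) = f₁(x) + f₂(x) − 2f₃(x). Then f is monotone decreasing on the interval (−∞, r/2]: for all real x ≤ y ≤ r/2, f(y) ≤ f(x). -/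
/-!
Write `u = n - x` and `v = n - (r - x)`. The function `f` is symmetric in `u, v` and
`u + v = 2n - r` does not depend on `x`, so `f` is a quadratic `4p² + Bp + C` in `p = uv`.
On `x ≤ r/2` the product `p = ((2n - r)/2)² - (x - r/2)²` increases with `x` and stays below its
maximum `((2n - r)/2)²`, and since `2n - r ≥ 1` and `n ≥ 1` the quadratic is decreasing up to
that maximum.
-/

open Set

lemma antitoneOn_quadratic_Iic {a b c p₀ : ℝ} (ha : 0 ≤ a) (hb : 2 * a * p₀ + b ≤ 0) :
    AntitoneOn (fun p ↦ a * p ^ 2 + b * p + c) (Iic p₀) := by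
  intro p hp q hq hpq
  have hsum : a * (p + q) + b ≤ 0 := by nlinarith [mem_Iic.mp hp, mem_Iic.mp hq]
  have hdiff : a * q ^ 2 + b * q + c - (a * p ^ 2 + b * p + c) = (q - p) * (a * (p + q) + b) := by
    ring
  nlinarith [mul_nonpos_of_nonneg_of_nonpos (sub_nonneg.mpr hpq) hsum]

lemma mul_sub_add_eq (n r x : ℝ) :
    (n - x) * (n - r + x) = ((2 * n - r) / 2) ^ 2 - (x - r / 2) ^ 2 := by
  ring

lemma mul_sub_add_le (n r x : ℝ) : (n - x) * (n - r + x) ≤ ((2 * n - r) / 2) ^ 2 := by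
  rw [mul_sub_add_eq]
  nlinarith [sq_nonneg (x - r / 2)]

lemma monotoneOn_mul_sub_add (n r : ℝ) :
    MonotoneOn (fun x ↦ (n - x) * (n - r + x)) (Iic (r / 2)) := by
  intro x _ y hy hxy
  simp only [mul_sub_add_eq]
  nlinarith [mem_Iic.mp hy]

lemma quartic_eq_quadratic_mul (n r x : ℝ) :
    (n + 1) * (n - x + 1) * (n - x) ^ 2 * (n - x - 1)
        + (n + 1) * (n - (r - x) + 1) * (n - (r - x)) ^ 2 * (n - (r - x) - 1)
        - 2 * ((n - 1) * (n - x) * (n - x + 1) * (n - (r - x)) * (n - (r - x) + 1)) =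
      4 * ((n - x) * (n - r + x)) ^ 2
        + ((n + 1) * (2 - 4 * (2 * n - r) ^ 2) - 2 * (n - 1) * (2 * n - r + 1))
          * ((n - x) * (n - r + x))
        + (n + 1) * ((2 * n - r) ^ 4 - (2 * n - r) ^ 2) := by
  ring

lemma quadratic_vertex_le {n r : ℝ} (hn : 1 ≤ n) (hr : r ≤ 2 * n - 1) :
    2 * 4 * ((2 * n - r) / 2) ^ 2
      + ((n + 1) * (2 - 4 * (2 * n - r) ^ 2) - 2 * (n - 1) * (2 * n - r + 1)) ≤ 0 := by
  have hσ : 1 ≤ 2 * n - r := by linarith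
  nlinarith [mul_le_mul hσ hσ zero_le_one (by linarith),
    mul_nonneg (sub_nonneg.mpr hn) (by linarith : 0 ≤ 2 * n - r + 1)]

theorem quartic_monotone_decreasing_general (n r : ℤ) (hn : 1 ≤ n) (hr : r < 2 * n)
    (f : ℝ → ℝ)
    (hf : ∀ x : ℝ, f x =
      ((n : ℝ) + 1) * ((n : ℝ) - x + 1) * ((n : ℝ) - x) ^ 2 * ((n : ℝ) - x - 1)
        + ((n : ℝ) + 1) * ((n : ℝ) - ((r : ℝ) - x) + 1) * ((n : ℝ) - ((r : ℝ) - x)) ^ 2 *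
            ((n : ℝ) - ((r : ℝ) - x) - 1)
        - 2 * (((n : ℝ) - 1) * ((n : ℝ) - x) * ((n : ℝ) - x + 1) *
            ((n : ℝ) - ((r : ℝ) - x)) * ((n : ℝ) - ((r : ℝ) - x) + 1))) :
    ∀ x y : ℝ, x ≤ y → y ≤ (r : ℝ) / 2 → f y ≤ f x := by
  intro x y hxy hy
  have hn' : (1 : ℝ) ≤ n := by exact_mod_cast hn
  have hr' : (r : ℝ) ≤ 2 * n - 1 := by exact_mod_cast Int.le_sub_one_of_lt hr
  rw [hf, hf, quartic_eq_quadratic_mul, quartic_eq_quadratic_mul]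
  exact antitoneOn_quadratic_Iic (by norm_num) (quadratic_vertex_le hn' hr')
    (mul_sub_add_le _ _ _) (mul_sub_add_le _ _ _)
    (monotoneOn_mul_sub_add _ _ (hxy.trans hy) hy hxy)

/-- The quartic polynomial `f = f₁ + f₂ - 2 f₃` is monotone decreasing on `(-∞, r/2]`. -/
theorem quartic_monotone_decreasing (n r : ℤ) (hn : 1 ≤ n) (hr0 : 0 ≤ r) (hr : r < 2 * n)
    (f : ℝ → ℝ)
    (hf : ∀ x : ℝ, f x =
      ((n : ℝ) + 1) * ((n : ℝ) - x + 1) * ((n : ℝ) - x) ^ 2 * ((n : ℝ) - x - 1)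
        + ((n : ℝ) + 1) * ((n : ℝ) - ((r : ℝ) - x) + 1) * ((n : ℝ) - ((r : ℝ) - x)) ^ 2 *
            ((n : ℝ) - ((r : ℝ) - x) - 1)
        - 2 * (((n : ℝ) - 1) * ((n : ℝ) - x) * ((n : ℝ) - x + 1) *
            ((n : ℝ) - ((r : ℝ) - x)) * ((n : ℝ) - ((r : ℝ) - x) + 1))) :
    ∀ x y : ℝ, x ≤ y → y ≤ (r : ℝ) / 2 → f y ≤ f x :=
  quartic_monotone_decreasing_general n r hn hr f hf
end

section
/- Fix integers n ≥ 1 and 0 ≤ r ≤ 2n. For 0 ≤ k ≤ ⌊r/2⌋ define α(n,r,k) = N(n+1,k)·N(n−1,r−k) + N(n+1,r−k)·N(n−1,k) − 2·N(n,r−k)·N(n,k). Then there exists an integer k′ such that α(n,r,k) ≥ 0 for all 0 ≤ k ≤ ⌊r/2⌋ with k ≤ k′, and α(n,r,k) ≤ 0 for all 0 ≤ k ≤ ⌊r/2⌋ with k > k′. -/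
/-!
Write `r = k + t`, `x = n - k`, `y = n - t`. Since `N(m+1, j) (m - j)(m + 1 - j) = m (m + 1) N(m, j)`,
clearing denominators gives `(n - 1) x(x+1) y(y+1) α(n, k+t, k) = N(n,k) N(n,t) ψ(n, x, y)` with
`ψ = alphaPoly`, so for `k, t < n` the sign of `α` is that of `ψ`. Passing from `k` to `k + 1`
replaces `(x, y)` by `(x - 1, y + 1)`, which does not increase `ψ` as long as `x > y`; and `α ≥ 0`
once `t ≥ n`, because then `N(n,t) = N(n-1,t) = 0`. So the `k ≤ ⌊r/2⌋` with `α(n,r,k) ≥ 0` form an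
initial segment.
-/

/-- The Narayana number `N(m,j) = (1/m) C(m,j) C(m,j+1)` for `0 ≤ j ≤ m`, with the
conventions `N(m,j) = 0` if `j < 0` or `j > m`, `N(0,0) = 1`, and `N(0,j) = 0` for `j ≥ 1`. -/
noncomputable def narayana (m : ℕ) (j : ℤ) : ℚ :=
  if j < 0 ∨ (m : ℤ) < j then 0
  else if m = 0 then (if j = 0 then 1 else 0)
  else (m.choose j.toNat * m.choose (j.toNat + 1) : ℚ) / m

/-- `α(n,r,k) = N(n+1,k) N(n-1,r-k) + N(n+1,r-k) N(n-1,k) - 2 N(n,r-k) N(n,k)`. -/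
noncomputable def alphaNRK (n r k : ℕ) : ℚ :=
  narayana (n + 1) (k : ℤ) * narayana (n - 1) ((r : ℤ) - k)
    + narayana (n + 1) ((r : ℤ) - k) * narayana (n - 1) (k : ℤ)
    - 2 * narayana n ((r : ℤ) - k) * narayana n (k : ℤ)

theorem exists_sign_change_of_nonneg_downward_closed {α : Type*} [Zero α] [LinearOrder α]
    {f : ℕ → α} {m : ℕ} (hf : ∀ k < m, 0 ≤ f (k + 1) → 0 ≤ f k) :
    ∃ k' : ℤ, ∀ k ≤ m, ((k : ℤ) ≤ k' → 0 ≤ f k) ∧ (k' < k → f k ≤ 0) := by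
  classical
  by_cases hneg : ∃ k, k ≤ m ∧ f k < 0
  · have hstays : ∀ k, Nat.find hneg ≤ k → k ≤ m → f k < 0 := by
      intro k hk
      induction k, hk using Nat.le_induction with
      | base => exact fun _ => (Nat.find_spec hneg).2
      | succ k _ ih =>
        exact fun hkm => lt_of_not_ge fun h => (ih (by omega)).not_ge (hf k (by omega) h)
    refine ⟨Nat.find hneg - 1, fun k hk => ⟨fun hle => ?_, fun hlt => (hstays k (by omega) hk).le⟩⟩
    exact not_lt.mp fun h => Nat.find_min hneg (by omega) ⟨hk, h⟩
  · simp only [not_exists, not_and, not_lt] at hneg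
    exact ⟨m, fun k hk => ⟨fun _ => hneg k hk, fun h => absurd h (by omega)⟩⟩

theorem Nat.cast_choose_mul_succ {R : Type*} [CommRing R] (m k : ℕ) :
    (m.choose k : R) * (m + 1) = (m + 1).choose k * (m + 1 - k) := by
  rcases le_or_gt k (m + 1) with hk | hk
  · have := congrArg (Nat.cast : ℕ → R) (Nat.choose_mul_succ_eq m k)
    push_cast [Nat.cast_sub hk] at this
    exact this
  · simp [Nat.choose_eq_zero_of_lt hk, Nat.choose_eq_zero_of_lt (Nat.lt_of_succ_lt hk)]

theorem narayana_natCast {m : ℕ} (hm : m ≠ 0) (k : ℕ) :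
    narayana m k = m.choose k * m.choose (k + 1) / m := by
  unfold narayana
  rcases le_or_gt k m with hk | hk
  · simp [hm, hk]
  · simp [hk, Nat.choose_eq_zero_of_lt (Nat.lt_succ_of_lt hk)]

theorem narayana_nonneg (m : ℕ) (j : ℤ) : 0 ≤ narayana m j := by
  unfold narayana
  split_ifs <;> positivity

theorem narayana_pos {m k : ℕ} (hk : k < m) : 0 < narayana m k := by
  rw [narayana_natCast (by omega)]
  have := Nat.choose_pos hk.le
  have := Nat.choose_pos (Nat.succ_le_of_lt hk)
  have : (0 : ℚ) < m := by exact_mod_cast Nat.zero_lt_of_lt hk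
  positivity

theorem narayana_eq_zero_of_le {m k : ℕ} (hmk : m ≤ k) (hk : k ≠ 0) : narayana m k = 0 := by
  rcases eq_or_ne m 0 with rfl | hm
  · simp [narayana, Nat.pos_of_ne_zero hk]
  · simp [narayana_natCast hm, Nat.choose_eq_zero_of_lt (Nat.lt_succ_of_le hmk)]

theorem narayana_succ_mul (m k : ℕ) :
    narayana (m + 1) k * ((m - k) * (m + 1 - k)) = m * (m + 1) * narayana m k := by
  rcases eq_or_ne m 0 with rfl | hm
  · rcases k with _ | k
    · simp
    · rw [narayana_eq_zero_of_le (by omega) (by omega)]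
      simp
  have h₁ := Nat.cast_choose_mul_succ (R := ℚ) m k
  have h₂ := Nat.cast_choose_mul_succ (R := ℚ) m (k + 1)
  rw [narayana_natCast hm, narayana_natCast (by omega : m + 1 ≠ 0)]
  push_cast at h₂ ⊢
  calc _ = ((m + 1).choose k * (m + 1 - k)) * ((m + 1).choose (k + 1) * (m + 1 - (k + 1)))
          / (m + 1 : ℚ) := by ring
    _ = _ := by rw [← h₁, ← h₂]; field_simp

def alphaPoly (n x y : ℚ) : ℚ :=
  (n + 1) * (x ^ 2 * (x ^ 2 - 1) + y ^ 2 * (y ^ 2 - 1)) - 2 * (n - 1) * (x * (x + 1)) * (y * (y + 1))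

theorem alphaPoly_le {n x y : ℚ} (hn : 1 ≤ n) (hy : 0 ≤ y) (hxy : y + 1 ≤ x) :
    alphaPoly n (x - 1) (y + 1) ≤ alphaPoly n x y := by
  obtain ⟨d, hd, rfl⟩ : ∃ d, 0 ≤ d ∧ x = y + 1 + d := ⟨x - y - 1, by linarith, by ring⟩
  obtain ⟨e, he, rfl⟩ : ∃ e, 0 ≤ e ∧ n = 1 + e := ⟨n - 1, by linarith, by ring⟩
  have key : alphaPoly (1 + e) (y + 1 + d) y - alphaPoly (1 + e) (y + 1 + d - 1) (y + 1) =
      2 * (2 + e) * d * (2 * ((y + d) ^ 2 + (y + d) * y + y ^ 2) + 3 * (2 * y + d) + 1)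
        + 4 * e * (y + 1 + d) * (y + 1) * d := by
    unfold alphaPoly; ring
  rw [← sub_nonneg, key]
  positivity

theorem alphaNRK_add (n k t : ℕ) :
    alphaNRK n (k + t) k = narayana (n + 1) k * narayana (n - 1) t
      + narayana (n + 1) t * narayana (n - 1) k - 2 * narayana n t * narayana n k := by
  simp [alphaNRK]

theorem alphaNRK_add_nonneg_of_le {n t : ℕ} (k : ℕ) (hnt : n ≤ t) (ht : t ≠ 0) :
    0 ≤ alphaNRK n (k + t) k := by
  rw [alphaNRK_add, narayana_eq_zero_of_le hnt ht,
    narayana_eq_zero_of_le (n.sub_le 1 |>.trans hnt) ht]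
  simpa using mul_nonneg (narayana_nonneg (n + 1) t) (narayana_nonneg (n - 1) k)

theorem alphaNRK_mul_eq {n : ℕ} (hn : n ≠ 0) (k t : ℕ) :
    alphaNRK n (k + t) k * ((n - 1) * ((n - k) * (n - k + 1)) * ((n - t) * (n - t + 1))) =
      narayana n k * narayana n t * alphaPoly n (n - k) (n - t) := by
  obtain ⟨m, rfl⟩ : ∃ m, n = m + 1 := ⟨n - 1, by omega⟩
  have e₁ := narayana_succ_mul (m + 1) k
  have e₂ := narayana_succ_mul m k
  have e₃ := narayana_succ_mul (m + 1) t
  have e₄ := narayana_succ_mul m t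
  rw [alphaNRK_add, Nat.add_sub_cancel]
  push_cast at e₁ e₃ ⊢
  unfold alphaPoly
  set X : ℚ := (m + 1 - k) * (m + 1 - k + 1)
  set Y : ℚ := (m + 1 - t) * (m + 1 - t + 1)
  linear_combination m * narayana m t * Y * e₁ - (m + 2) * narayana (m + 1) k * Y * e₄
    + m * narayana m k * X * e₃ - (m + 2) * narayana (m + 1) t * X * e₂

theorem alphaNRK_add_nonneg_iff {n k t : ℕ} (hn : 1 < n) (hk : k < n) (ht : t < n) :
    0 ≤ alphaNRK n (k + t) k ↔ 0 ≤ alphaPoly n (n - k) (n - t) := by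
  have h₁ : (0 : ℚ) < n - 1 := sub_pos.2 (by exact_mod_cast hn)
  have h₂ : (0 : ℚ) < n - k := sub_pos.2 (by exact_mod_cast hk)
  have h₃ : (0 : ℚ) < n - t := sub_pos.2 (by exact_mod_cast ht)
  have hD : (0 : ℚ) < (n - 1) * ((n - k) * (n - k + 1)) * ((n - t) * (n - t + 1)) := by
    positivity
  rw [← mul_nonneg_iff_of_pos_right hD, alphaNRK_mul_eq (by omega),
    mul_nonneg_iff_of_pos_left (mul_pos (narayana_pos hk) (narayana_pos ht))]

theorem alphaNRK_nonneg_of_succ {n r k : ℕ} (hkr : 2 * k + 1 ≤ r)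
    (h : 0 ≤ alphaNRK n r (k + 1)) : 0 ≤ alphaNRK n r k := by
  obtain ⟨t, rfl⟩ : ∃ t, r = k + (t + 1) := ⟨r - k - 1, by omega⟩
  rcases le_or_gt n (t + 1) with hnt | hnt
  · exact alphaNRK_add_nonneg_of_le k hnt t.succ_ne_zero
  rw [show k + (t + 1) = k + 1 + t by ring,
    alphaNRK_add_nonneg_iff (by omega) (by omega) (by omega)] at h
  rw [alphaNRK_add_nonneg_iff (by omega) (by omega) hnt]
  have hkt : (k : ℚ) ≤ t := by exact_mod_cast (by omega : k ≤ t)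
  have hle := alphaPoly_le (n := n) (x := n - k) (y := n - (t + 1))
    (by norm_cast; omega) (sub_nonneg.2 (by exact_mod_cast hnt.le)) (by linarith)
  push_cast at h hle ⊢
  refine h.trans (Eq.trans_le ?_ hle)
  congr 1 <;> ring

theorem alphaNRK_sign_change_general (n r : ℕ) :
    ∃ k' : ℤ, ∀ k : ℕ, k ≤ r / 2 →
      ((k : ℤ) ≤ k' → 0 ≤ alphaNRK n r k) ∧ (k' < (k : ℤ) → alphaNRK n r k ≤ 0) :=
  exists_sign_change_of_nonneg_downward_closed fun _ hk => alphaNRK_nonneg_of_succ (by omega)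

/-- For fixed `n ≥ 1` and `0 ≤ r ≤ 2n` there is an integer `k'` such that
`α(n,r,k) ≥ 0` for `k ≤ k'` and `α(n,r,k) ≤ 0` for `k > k'`, for `0 ≤ k ≤ ⌊r/2⌋`. -/
theorem alphaNRK_sign_change (n r : ℕ) (hn : 1 ≤ n) (hr : r ≤ 2 * n) :
    ∃ k' : ℤ, ∀ k : ℕ, k ≤ r / 2 →
      ((k : ℤ) ≤ k' → 0 ≤ alphaNRK n r k) ∧ (k' < (k : ℤ) → alphaNRK n r k ≤ 0) :=
  alphaNRK_sign_change_general n r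
end
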